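/- Let N ≥ 1 be an integer and λ > 0, and set c_N = 2(1−λ)N. On the open set Ω = {(x,y) ∈ ℝ^N × ℝ^N : x_1 < x_2 < ⋯ < x_N, y_1 < y_2 < ⋯ < y_N, and x_N < y_1} define F(x,y) = ∏_{j=1}^N e^{−(x_j²−y_j²)/2} · ∏_{1≤j<k≤N} (x_k−x_j)^λ (y_k−y_j)^λ / ∏_{j,k=1}^N (y_k−x_j)^λ. Then on Ω one has the identity H(x) F(x,y) = (H(y) + c_N) F(x,y), where H(x) denotes the Calogero Hamiltonian with coupling λ acting in the variables x_1,…,x_N and H(y) the same operator acting in the variables y_1,…,y_N. -/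

import Mathlib

/-- Partial derivative in the `j`-th coordinate of a function on `ℝ^N`. -/
noncomputable def pd {N : ℕ} (j : Fin N) (f : (Fin N → ℝ) → ℝ) : (Fin N → ℝ) → ℝ :=
  fun x => deriv (fun t => f (Function.update x j t)) (x j)

/-- The Calogero Hamiltonian with coupling `lam` in `N` variables. -/
noncomputable def calogeroH (N : ℕ) (lam : ℝ) (f : (Fin N → ℝ) → ℝ) : (Fin N → ℝ) → ℝ :=
  fun x => (∑ j, (- pd j (pd j f) x + (x j)^2 * f x)) +
    2*lam*(lam-1) * ∑ j, ∑ k, (if j < k then f x / (x j - x k)^2 else 0)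

/-- The kernel function `F(x,y)` of Lemma 3.1. -/
noncomputable def F0 (N : ℕ) (lam : ℝ) (x y : Fin N → ℝ) : ℝ :=
  (∏ j, Real.exp (-((x j)^2 - (y j)^2)/2)) *
  (∏ j, ∏ k, (if j < k then (x k - x j) ^ lam * (y k - y j) ^ lam else 1)) /
  ∏ j, ∏ k, (y k - x j) ^ lam


open Finset Real Filter Topology
open Function

section Calo
variable {N : ℕ}

/-- domain -/
def CDom (x y : Fin N → ℝ) : Prop :=
  (∀ j k : Fin N, j < k → x j < x k) ∧ (∀ j k : Fin N, j < k → y j < y k) ∧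
  (∀ j k : Fin N, x j < y k)

lemma CDom.xne {x y : Fin N → ℝ} (h : CDom x y) {j k : Fin N} (hjk : j ≠ k) : x j - x k ≠ 0 := by
  rcases lt_or_gt_of_ne hjk with h1 | h1
  · exact sub_ne_zero.2 (ne_of_lt (h.1 j k h1))
  · exact sub_ne_zero.2 (ne_of_gt (h.1 k j h1))

lemma CDom.yne {x y : Fin N → ℝ} (h : CDom x y) {j k : Fin N} (hjk : j ≠ k) : y j - y k ≠ 0 := by
  rcases lt_or_gt_of_ne hjk with h1 | h1
  · exact sub_ne_zero.2 (ne_of_lt (h.2.1 j k h1))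
  · exact sub_ne_zero.2 (ne_of_gt (h.2.1 k j h1))

lemma CDom.xypos {x y : Fin N → ℝ} (h : CDom x y) (j k : Fin N) : 0 < y k - x j :=
  sub_pos.2 (h.2.2 j k)

lemma CDom.xyne {x y : Fin N → ℝ} (h : CDom x y) (j k : Fin N) : y k - x j ≠ 0 :=
  ne_of_gt (h.xypos j k)

/-- log-form exponent -/
noncomputable def GG (lam : ℝ) (x y : Fin N → ℝ) : ℝ :=
  (∑ j, ((y j)^2 - (x j)^2)/2)
  + lam * (∑ j, ∑ k, if j < k then Real.log (x k - x j) + Real.log (y k - y j) else 0)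
  - lam * ∑ j, ∑ k, Real.log (y k - x j)

lemma F0_eq_exp (lam : ℝ) {x y : Fin N → ℝ} (h : CDom x y) :
    F0 N lam x y = Real.exp (GG lam x y) := by
  have h1 : (∏ j, Real.exp (-((x j)^2 - (y j)^2)/2)) =
      Real.exp (∑ j, ((y j)^2 - (x j)^2)/2) := by
    rw [← Real.exp_sum]
    congr 1
    exact Finset.sum_congr rfl fun j _ => by ring
  have h2 : (∏ j : Fin N, ∏ k : Fin N,
      (if j < k then (x k - x j) ^ lam * (y k - y j) ^ lam else 1)) =
      Real.exp (lam * ∑ j, ∑ k, if j < k then Real.log (x k - x j) + Real.log (y k - y j) else 0) := by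
    rw [Finset.mul_sum, Real.exp_sum]
    refine Finset.prod_congr rfl fun j _ => ?_
    rw [Finset.mul_sum, Real.exp_sum]
    refine Finset.prod_congr rfl fun k _ => ?_
    by_cases hjk : j < k
    · have hx : (0:ℝ) < x k - x j := sub_pos.2 (h.1 j k hjk)
      have hy : (0:ℝ) < y k - y j := sub_pos.2 (h.2.1 j k hjk)
      rw [if_pos hjk, if_pos hjk, Real.rpow_def_of_pos hx, Real.rpow_def_of_pos hy,
        ← Real.exp_add]
      congr 1; ring
    · rw [if_neg hjk, if_neg hjk, mul_zero, Real.exp_zero]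
  have h3 : (∏ j : Fin N, ∏ k : Fin N, (y k - x j) ^ lam) =
      Real.exp (lam * ∑ j, ∑ k, Real.log (y k - x j)) := by
    rw [Finset.mul_sum, Real.exp_sum]
    refine Finset.prod_congr rfl fun j _ => ?_
    rw [Finset.mul_sum, Real.exp_sum]
    refine Finset.prod_congr rfl fun k _ => ?_
    rw [Real.rpow_def_of_pos (h.xypos j k), mul_comm]
  rw [F0, h1, h2, h3, ← Real.exp_add, ← Real.exp_sub, GG]

lemma continuous_update_slot (x : Fin N → ℝ) (j : Fin N) :
    Continuous (fun t : ℝ => Function.update x j t) := by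
  refine continuous_pi fun k => ?_
  simp only [Function.update_apply]
  by_cases hk : k = j
  · simp only [if_pos hk]; exact continuous_id
  · simp only [if_neg hk]; exact continuous_const

lemma CDom.eventually_x {x y : Fin N → ℝ} (h : CDom x y) (j : Fin N) :
    ∀ᶠ t in 𝓝 (x j), CDom (Function.update x j t) y := by
  have hU : IsOpen {x' : Fin N → ℝ |
      (∀ j k : Fin N, j < k → x' j < x' k) ∧ ∀ j k : Fin N, x' j < y k} := by
    have h1 : IsOpen {x' : Fin N → ℝ | ∀ j k : Fin N, j < k → x' j < x' k} := by
      have : {x' : Fin N → ℝ | ∀ j k : Fin N, j < k → x' j < x' k} =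
          ⋂ (j : Fin N) (k : Fin N), {x' | j < k → x' j < x' k} := by
        ext x'; simp [Set.mem_iInter]
      rw [this]
      refine isOpen_iInter_of_finite fun a => isOpen_iInter_of_finite fun b => ?_
      by_cases hab : a < b
      · have : {x' : Fin N → ℝ | a < b → x' a < x' b} = {x' | x' a < x' b} := by
          ext x'; simp [hab]
        rw [this]; exact isOpen_lt (continuous_apply a) (continuous_apply b)
      · have : {x' : Fin N → ℝ | a < b → x' a < x' b} = Set.univ := by
          ext x'; simp [hab]
        rw [this]; exact isOpen_univ
    have h2 : IsOpen {x' : Fin N → ℝ | ∀ j k : Fin N, x' j < y k} := by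
      have : {x' : Fin N → ℝ | ∀ j k : Fin N, x' j < y k} =
          ⋂ (j : Fin N) (k : Fin N), {x' | x' j < y k} := by
        ext x'; simp [Set.mem_iInter]
      rw [this]
      exact isOpen_iInter_of_finite fun a => isOpen_iInter_of_finite fun b =>
        isOpen_lt (continuous_apply a) continuous_const
    exact h1.inter h2
  have hmem : x ∈ {x' : Fin N → ℝ |
      (∀ j k : Fin N, j < k → x' j < x' k) ∧ ∀ j k : Fin N, x' j < y k} := ⟨h.1, h.2.2⟩
  have hev := ((continuous_update_slot x j).continuousAt (x := x j)).eventually_mem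
    (hU.mem_nhds (by rwa [Function.update_eq_self]))
  exact hev.mono fun t ht => ⟨ht.1, h.2.1, ht.2⟩

lemma CDom.eventually_y {x y : Fin N → ℝ} (h : CDom x y) (j : Fin N) :
    ∀ᶠ t in 𝓝 (y j), CDom x (Function.update y j t) := by
  have hU : IsOpen {y' : Fin N → ℝ |
      (∀ j k : Fin N, j < k → y' j < y' k) ∧ ∀ j k : Fin N, x j < y' k} := by
    have h1 : IsOpen {y' : Fin N → ℝ | ∀ j k : Fin N, j < k → y' j < y' k} := by
      have : {y' : Fin N → ℝ | ∀ j k : Fin N, j < k → y' j < y' k} =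
          ⋂ (j : Fin N) (k : Fin N), {y' | j < k → y' j < y' k} := by
        ext y'; simp [Set.mem_iInter]
      rw [this]
      refine isOpen_iInter_of_finite fun a => isOpen_iInter_of_finite fun b => ?_
      by_cases hab : a < b
      · have : {y' : Fin N → ℝ | a < b → y' a < y' b} = {y' | y' a < y' b} := by
          ext y'; simp [hab]
        rw [this]; exact isOpen_lt (continuous_apply a) (continuous_apply b)
      · have : {y' : Fin N → ℝ | a < b → y' a < y' b} = Set.univ := by
          ext y'; simp [hab]
        rw [this]; exact isOpen_univ
    have h2 : IsOpen {y' : Fin N → ℝ | ∀ j k : Fin N, x j < y' k} := by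
      have : {y' : Fin N → ℝ | ∀ j k : Fin N, x j < y' k} =
          ⋂ (j : Fin N) (k : Fin N), {y' | x j < y' k} := by
        ext y'; simp [Set.mem_iInter]
      rw [this]
      exact isOpen_iInter_of_finite fun a => isOpen_iInter_of_finite fun b =>
        isOpen_lt continuous_const (continuous_apply b)
    exact h1.inter h2
  have hmem : y ∈ {y' : Fin N → ℝ |
      (∀ j k : Fin N, j < k → y' j < y' k) ∧ ∀ j k : Fin N, x j < y' k} := ⟨h.2.1, h.2.2⟩
  have hev := ((continuous_update_slot y j).continuousAt (x := y j)).eventually_mem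
    (hU.mem_nhds (by rwa [Function.update_eq_self]))
  exact hev.mono fun t ht => ⟨h.1, ht.1, ht.2⟩

/-- first-derivative coefficients -/
noncomputable def PXc (lam : ℝ) (x y : Fin N → ℝ) (j : Fin N) : ℝ :=
  -x j + lam * (∑ k, if k = j then 0 else (x j - x k)⁻¹) + lam * ∑ k, (y k - x j)⁻¹

noncomputable def QXc (lam : ℝ) (x y : Fin N → ℝ) (j : Fin N) : ℝ :=
  -1 - lam * (∑ k, if k = j then 0 else ((x j - x k)^2)⁻¹) + lam * ∑ k, ((y k - x j)^2)⁻¹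

noncomputable def PYc (lam : ℝ) (x y : Fin N → ℝ) (j : Fin N) : ℝ :=
  y j + lam * (∑ k, if k = j then 0 else (y j - y k)⁻¹) - lam * ∑ k, (y j - x k)⁻¹

noncomputable def QYc (lam : ℝ) (x y : Fin N → ℝ) (j : Fin N) : ℝ :=
  1 - lam * (∑ k, if k = j then 0 else ((y j - y k)^2)⁻¹) + lam * ∑ k, ((y j - x k)^2)⁻¹

lemma hasDerivAt_GG_x (lam : ℝ) {x y : Fin N → ℝ} (h : CDom x y) (j : Fin N) :
    HasDerivAt (fun t => GG lam (Function.update x j t) y) (PXc lam x y j) (x j) := by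
  have hA : HasDerivAt (fun t => ∑ i, ((y i)^2 - (Function.update x j t i)^2)/2)
      (∑ i, if i = j then -(x j) else 0) (x j) := by
    refine HasDerivAt.fun_sum fun i _ => ?_
    by_cases hi : i = j
    · subst hi
      have hfun : (fun t => ((y i)^2 - (Function.update x i t i)^2)/2)
          = fun t => ((y i)^2 - t^2)/2 := by
        funext t; rw [Function.update_self]
      rw [hfun, if_pos rfl]
      have := ((hasDerivAt_pow 2 (x i)).const_sub ((y i)^2)).div_const 2
      refine HasDerivAt.congr_deriv this ?_
      simp; ring
    · have hfun : (fun t => ((y i)^2 - (Function.update x j t i)^2)/2)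
          = fun _ => ((y i)^2 - (x i)^2)/2 := by
        funext t; rw [Function.update_of_ne hi]
      rw [hfun, if_neg hi]
      exact hasDerivAt_const _ _
  have hB : HasDerivAt (fun t => ∑ i, ∑ k,
        if i < k then Real.log (Function.update x j t k - Function.update x j t i)
          + Real.log (y k - y i) else 0)
      (∑ i, ∑ k, if i < k then
          (if i = j then -(x k - x j)⁻¹ else if k = j then (x j - x i)⁻¹ else 0) else 0)
      (x j) := by
    refine HasDerivAt.fun_sum fun i _ => HasDerivAt.fun_sum fun k _ => ?_
    by_cases hik : i < k
    · by_cases hij : i = j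
      · subst hij
        have hkj : k ≠ i := ne_of_gt hik
        have hfun : (fun t => if i < k then
              Real.log (Function.update x i t k - Function.update x i t i)
              + Real.log (y k - y i) else 0)
            = fun t => Real.log (x k - t) + Real.log (y k - y i) := by
          funext t
          rw [if_pos hik, Function.update_self, Function.update_of_ne hkj]
        rw [hfun, if_pos hik, if_pos rfl]
        have hne : x k - x i ≠ 0 := sub_ne_zero.2 (ne_of_gt (h.1 i k hik))
        have := (((hasDerivAt_id (x i)).const_sub (x k)).log hne).add_const
          (Real.log (y k - y i))
        refine HasDerivAt.congr_deriv this ?_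
        simp only [id]
        field_simp
      · by_cases hkj : k = j
        · subst hkj
          have hfun : (fun t => if i < k then
                Real.log (Function.update x k t k - Function.update x k t i)
                + Real.log (y k - y i) else 0)
              = fun t => Real.log (t - x i) + Real.log (y k - y i) := by
            funext t
            rw [if_pos hik, Function.update_self, Function.update_of_ne hij]
          rw [hfun, if_pos hik, if_neg hij, if_pos rfl]
          have hne : x k - x i ≠ 0 := sub_ne_zero.2 (ne_of_gt (h.1 i k hik))
          have := (((hasDerivAt_id (x k)).sub_const (x i)).log hne).add_const
            (Real.log (y k - y i))
          refine HasDerivAt.congr_deriv this ?_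
          simp only [id]
          field_simp
        · have hfun : (fun t => if i < k then
                Real.log (Function.update x j t k - Function.update x j t i)
                + Real.log (y k - y i) else 0)
              = fun _ => Real.log (x k - x i) + Real.log (y k - y i) := by
            funext t
            rw [if_pos hik, Function.update_of_ne hkj, Function.update_of_ne hij]
          rw [hfun, if_pos hik, if_neg hij, if_neg hkj]
          exact hasDerivAt_const _ _
    · have hfun : (fun t => if i < k then
            Real.log (Function.update x j t k - Function.update x j t i)
            + Real.log (y k - y i) else 0) = fun _ => (0:ℝ) := by
        funext t; rw [if_neg hik]
      rw [hfun, if_neg hik]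
      exact hasDerivAt_const _ _
  have hC : HasDerivAt (fun t => ∑ i, ∑ k, Real.log (y k - Function.update x j t i))
      (∑ i, ∑ k, if i = j then -(y k - x j)⁻¹ else 0) (x j) := by
    refine HasDerivAt.fun_sum fun i _ => HasDerivAt.fun_sum fun k _ => ?_
    by_cases hi : i = j
    · subst hi
      have hfun : (fun t => Real.log (y k - Function.update x i t i))
          = fun t => Real.log (y k - t) := by
        funext t; rw [Function.update_self]
      rw [hfun, if_pos rfl]
      have hne : y k - x i ≠ 0 := h.xyne i k
      have := ((hasDerivAt_id (x i)).const_sub (y k)).log hne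
      refine HasDerivAt.congr_deriv this ?_
      simp only [id]
      field_simp
    · have hfun : (fun t => Real.log (y k - Function.update x j t i))
          = fun _ => Real.log (y k - x i) := by
        funext t; rw [Function.update_of_ne hi]
      rw [hfun, if_neg hi]
      exact hasDerivAt_const _ _
  have htot := (hA.add (hB.const_mul lam)).sub (hC.const_mul lam)
  have hfun : (fun t => GG lam (Function.update x j t) y) =
      fun t => (∑ i, ((y i)^2 - (Function.update x j t i)^2)/2)
        + lam * (∑ i, ∑ k,
          if i < k then Real.log (Function.update x j t k - Function.update x j t i)
            + Real.log (y k - y i) else 0)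
        - lam * ∑ i, ∑ k, Real.log (y k - Function.update x j t i) := rfl
  rw [hfun]
  refine HasDerivAt.congr_deriv htot ?_
  -- value identity
  have e1 : (∑ i, if i = j then -(x j) else (0:ℝ)) = -(x j) := by simp
  have e2 : (∑ i : Fin N, ∑ k : Fin N, if i < k then
        (if i = j then -(x k - x j)⁻¹ else if k = j then (x j - x i)⁻¹ else 0) else 0)
      = ∑ k, if k = j then 0 else (x j - x k)⁻¹ := by
    have hsplit : ∀ i k : Fin N, (if i < k then
          (if i = j then -(x k - x j)⁻¹ else if k = j then (x j - x i)⁻¹ else 0) else 0)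
        = (if i = j then (if j < k then -(x k - x j)⁻¹ else 0) else 0)
          + (if k = j then (if i < j then (x j - x i)⁻¹ else 0) else 0) := by
      intro i k
      by_cases hij : i = j <;> by_cases hkj : k = j
      · subst hij; subst hkj; simp
      · subst hij; simp [hkj]
      · subst hkj; by_cases hik : i < k <;> simp [hik, hij]
      · by_cases hik : i < k <;> simp [hik, hij, hkj]
    calc (∑ i : Fin N, ∑ k : Fin N, if i < k then
            (if i = j then -(x k - x j)⁻¹ else if k = j then (x j - x i)⁻¹ else 0) else 0)
        = (∑ i : Fin N, ∑ k : Fin N, ((if i = j then (if j < k then -(x k - x j)⁻¹ else 0) else 0)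
            + (if k = j then (if i < j then (x j - x i)⁻¹ else 0) else 0))) := by
          exact Finset.sum_congr rfl fun i _ => Finset.sum_congr rfl fun k _ => hsplit i k
      _ = (∑ k : Fin N, if j < k then -(x k - x j)⁻¹ else 0)
            + (∑ i : Fin N, if i < j then (x j - x i)⁻¹ else 0) := by
          simp only [Finset.sum_add_distrib]
          congr 1
          · rw [Finset.sum_comm]
            exact Finset.sum_congr rfl fun k _ => by simp
          · exact Finset.sum_congr rfl fun i _ => by simp
      _ = ∑ k, if k = j then 0 else (x j - x k)⁻¹ := by
          rw [← Finset.sum_add_distrib]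
          refine Finset.sum_congr rfl fun k _ => ?_
          rcases lt_trichotomy j k with hk | hk | hk
          · rw [if_pos hk, if_neg (not_lt_of_gt hk), if_neg (ne_of_gt hk)]
            rw [← neg_sub (x k) (x j), inv_neg]
            ring
          · subst hk; simp
          · rw [if_neg (not_lt_of_gt hk), if_pos hk, if_neg (ne_of_lt hk)]
            ring
  have e3 : (∑ i : Fin N, ∑ k : Fin N, if i = j then -(y k - x j)⁻¹ else (0:ℝ))
      = -∑ k, (y k - x j)⁻¹ := by
    rw [Finset.sum_comm, ← Finset.sum_neg_distrib]
    exact Finset.sum_congr rfl fun k _ => by simp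
  rw [e1, e2, e3, PXc]
  ring

lemma hasDerivAt_GG_y (lam : ℝ) {x y : Fin N → ℝ} (h : CDom x y) (j : Fin N) :
    HasDerivAt (fun t => GG lam x (Function.update y j t)) (PYc lam x y j) (y j) := by
  have hA : HasDerivAt (fun t => ∑ i, ((Function.update y j t i)^2 - (x i)^2)/2)
      (∑ i, if i = j then y j else 0) (y j) := by
    refine HasDerivAt.fun_sum fun i _ => ?_
    by_cases hi : i = j
    · subst hi
      have hfun : (fun t => ((Function.update y i t i)^2 - (x i)^2)/2)
          = fun t => (t^2 - (x i)^2)/2 := by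
        funext t; rw [Function.update_self]
      rw [hfun, if_pos rfl]
      have := ((hasDerivAt_pow 2 (y i)).sub_const ((x i)^2)).div_const 2
      refine HasDerivAt.congr_deriv this ?_
      simp
    · have hfun : (fun t => ((Function.update y j t i)^2 - (x i)^2)/2)
          = fun _ => ((y i)^2 - (x i)^2)/2 := by
        funext t; rw [Function.update_of_ne hi]
      rw [hfun, if_neg hi]
      exact hasDerivAt_const _ _
  have hB : HasDerivAt (fun t => ∑ i, ∑ k,
        if i < k then Real.log (x k - x i)
          + Real.log (Function.update y j t k - Function.update y j t i) else 0)
      (∑ i, ∑ k, if i < k then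
          (if i = j then -(y k - y j)⁻¹ else if k = j then (y j - y i)⁻¹ else 0) else 0)
      (y j) := by
    refine HasDerivAt.fun_sum fun i _ => HasDerivAt.fun_sum fun k _ => ?_
    by_cases hik : i < k
    · by_cases hij : i = j
      · subst hij
        have hkj : k ≠ i := ne_of_gt hik
        have hfun : (fun t => if i < k then Real.log (x k - x i)
              + Real.log (Function.update y i t k - Function.update y i t i) else 0)
            = fun t => Real.log (y k - t) + Real.log (x k - x i) := by
          funext t
          rw [if_pos hik, Function.update_self, Function.update_of_ne hkj]
          ring
        rw [hfun, if_pos hik, if_pos rfl]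
        have hne : y k - y i ≠ 0 := sub_ne_zero.2 (ne_of_gt (h.2.1 i k hik))
        have := (((hasDerivAt_id (y i)).const_sub (y k)).log hne).add_const
          (Real.log (x k - x i))
        refine HasDerivAt.congr_deriv this ?_
        simp only [id]
        field_simp
      · by_cases hkj : k = j
        · subst hkj
          have hfun : (fun t => if i < k then Real.log (x k - x i)
                + Real.log (Function.update y k t k - Function.update y k t i) else 0)
              = fun t => Real.log (t - y i) + Real.log (x k - x i) := by
            funext t
            rw [if_pos hik, Function.update_self, Function.update_of_ne hij]
            ring
          rw [hfun, if_pos hik, if_neg hij, if_pos rfl]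
          have hne : y k - y i ≠ 0 := sub_ne_zero.2 (ne_of_gt (h.2.1 i k hik))
          have := (((hasDerivAt_id (y k)).sub_const (y i)).log hne).add_const
            (Real.log (x k - x i))
          refine HasDerivAt.congr_deriv this ?_
          simp only [id]
          field_simp
        · have hfun : (fun t => if i < k then Real.log (x k - x i)
                + Real.log (Function.update y j t k - Function.update y j t i) else 0)
              = fun _ => Real.log (x k - x i) + Real.log (y k - y i) := by
            funext t
            rw [if_pos hik, Function.update_of_ne hkj, Function.update_of_ne hij]
          rw [hfun, if_pos hik, if_neg hij, if_neg hkj]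
          exact hasDerivAt_const _ _
    · have hfun : (fun t => if i < k then Real.log (x k - x i)
            + Real.log (Function.update y j t k - Function.update y j t i) else 0)
          = fun _ => (0:ℝ) := by
        funext t; rw [if_neg hik]
      rw [hfun, if_neg hik]
      exact hasDerivAt_const _ _
  have hC : HasDerivAt (fun t => ∑ i, ∑ k, Real.log (Function.update y j t k - x i))
      (∑ i, ∑ k, if k = j then (y j - x i)⁻¹ else 0) (y j) := by
    refine HasDerivAt.fun_sum fun i _ => HasDerivAt.fun_sum fun k _ => ?_
    by_cases hk : k = j
    · subst hk
      have hfun : (fun t => Real.log (Function.update y k t k - x i))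
          = fun t => Real.log (t - x i) := by
        funext t; rw [Function.update_self]
      rw [hfun, if_pos rfl]
      have hne : y k - x i ≠ 0 := h.xyne i k
      have := ((hasDerivAt_id (y k)).sub_const (x i)).log hne
      refine HasDerivAt.congr_deriv this ?_
      simp only [id]
      field_simp
    · have hfun : (fun t => Real.log (Function.update y j t k - x i))
          = fun _ => Real.log (y k - x i) := by
        funext t; rw [Function.update_of_ne hk]
      rw [hfun, if_neg hk]
      exact hasDerivAt_const _ _
  have htot := (hA.add (hB.const_mul lam)).sub (hC.const_mul lam)
  have hfun : (fun t => GG lam x (Function.update y j t)) =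
      fun t => (∑ i, ((Function.update y j t i)^2 - (x i)^2)/2)
        + lam * (∑ i, ∑ k,
          if i < k then Real.log (x k - x i)
            + Real.log (Function.update y j t k - Function.update y j t i) else 0)
        - lam * ∑ i, ∑ k, Real.log (Function.update y j t k - x i) := rfl
  rw [hfun]
  refine HasDerivAt.congr_deriv htot ?_
  have e1 : (∑ i, if i = j then y j else (0:ℝ)) = y j := by simp
  have e2 : (∑ i : Fin N, ∑ k : Fin N, if i < k then
        (if i = j then -(y k - y j)⁻¹ else if k = j then (y j - y i)⁻¹ else 0) else 0)
      = ∑ k, if k = j then 0 else (y j - y k)⁻¹ := by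
    have hsplit : ∀ i k : Fin N, (if i < k then
          (if i = j then -(y k - y j)⁻¹ else if k = j then (y j - y i)⁻¹ else 0) else 0)
        = (if i = j then (if j < k then -(y k - y j)⁻¹ else 0) else 0)
          + (if k = j then (if i < j then (y j - y i)⁻¹ else 0) else 0) := by
      intro i k
      by_cases hij : i = j <;> by_cases hkj : k = j
      · subst hij; subst hkj; simp
      · subst hij; simp [hkj]
      · subst hkj; by_cases hik : i < k <;> simp [hik, hij]
      · by_cases hik : i < k <;> simp [hik, hij, hkj]
    calc (∑ i : Fin N, ∑ k : Fin N, if i < k then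
            (if i = j then -(y k - y j)⁻¹ else if k = j then (y j - y i)⁻¹ else 0) else 0)
        = (∑ i : Fin N, ∑ k : Fin N, ((if i = j then (if j < k then -(y k - y j)⁻¹ else 0) else 0)
            + (if k = j then (if i < j then (y j - y i)⁻¹ else 0) else 0))) := by
          exact Finset.sum_congr rfl fun i _ => Finset.sum_congr rfl fun k _ => hsplit i k
      _ = (∑ k : Fin N, if j < k then -(y k - y j)⁻¹ else 0)
            + (∑ i : Fin N, if i < j then (y j - y i)⁻¹ else 0) := by
          simp only [Finset.sum_add_distrib]
          congr 1
          · rw [Finset.sum_comm]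
            exact Finset.sum_congr rfl fun k _ => by simp
          · exact Finset.sum_congr rfl fun i _ => by simp
      _ = ∑ k, if k = j then 0 else (y j - y k)⁻¹ := by
          rw [← Finset.sum_add_distrib]
          refine Finset.sum_congr rfl fun k _ => ?_
          rcases lt_trichotomy j k with hk | hk | hk
          · rw [if_pos hk, if_neg (not_lt_of_gt hk), if_neg (ne_of_gt hk)]
            rw [← neg_sub (y k) (y j), inv_neg]
            ring
          · subst hk; simp
          · rw [if_neg (not_lt_of_gt hk), if_pos hk, if_neg (ne_of_lt hk)]
            ring
  have e3 : (∑ i : Fin N, ∑ k : Fin N, if k = j then (y j - x i)⁻¹ else (0:ℝ))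
      = ∑ i, (y j - x i)⁻¹ := by
    exact Finset.sum_congr rfl fun i _ => by simp
  rw [e1, e2, e3, PYc]

lemma hasDerivAt_PXc (lam : ℝ) {x y : Fin N → ℝ} (h : CDom x y) (j : Fin N) :
    HasDerivAt (fun t => PXc lam (Function.update x j t) y j) (QXc lam x y j) (x j) := by
  have hfun : (fun t => PXc lam (Function.update x j t) y j)
      = fun t => -t + lam * (∑ k, if k = j then 0 else (t - x k)⁻¹)
          + lam * ∑ k, (y k - t)⁻¹ := by
    funext t
    rw [PXc, Function.update_self]
    have : (∑ k, if k = j then (0:ℝ) else (t - Function.update x j t k)⁻¹)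
        = ∑ k, if k = j then (0:ℝ) else (t - x k)⁻¹ := by
      refine Finset.sum_congr rfl fun k _ => ?_
      by_cases hk : k = j
      · simp [hk]
      · rw [if_neg hk, if_neg hk, Function.update_of_ne hk]
    rw [this]
  rw [hfun]
  have h1 : HasDerivAt (fun t : ℝ => -t) (-1 : ℝ) (x j) := (hasDerivAt_id (x j)).neg
  have h2 : HasDerivAt (fun t => ∑ k, if k = j then (0:ℝ) else (t - x k)⁻¹)
      (∑ k, if k = j then 0 else -(((x j - x k)^2)⁻¹)) (x j) := by
    refine HasDerivAt.fun_sum fun k _ => ?_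
    by_cases hk : k = j
    · simp only [if_pos hk]; exact hasDerivAt_const _ _
    · simp only [if_neg hk]
      have hne : x j - x k ≠ 0 := h.xne (Ne.symm hk)
      have := ((hasDerivAt_id (x j)).sub_const (x k)).inv hne
      refine HasDerivAt.congr_deriv this ?_
      simp only [id]
      field_simp
  have h3 : HasDerivAt (fun t => ∑ k, (y k - t)⁻¹)
      (∑ k, ((y k - x j)^2)⁻¹) (x j) := by
    refine HasDerivAt.fun_sum fun k _ => ?_
    have hne : y k - x j ≠ 0 := h.xyne j k
    have := ((hasDerivAt_id (x j)).const_sub (y k)).inv hne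
    refine HasDerivAt.congr_deriv this ?_
    simp only [id]
    field_simp
  have htot := (h1.add (h2.const_mul lam)).add (h3.const_mul lam)
  refine HasDerivAt.congr_deriv htot ?_
  rw [QXc]
  have : (∑ k, if k = j then (0:ℝ) else -(((x j - x k)^2)⁻¹))
      = -∑ k, if k = j then (0:ℝ) else ((x j - x k)^2)⁻¹ := by
    rw [← Finset.sum_neg_distrib]
    refine Finset.sum_congr rfl fun k _ => ?_
    by_cases hk : k = j <;> simp [hk]
  rw [this]
  ring

lemma hasDerivAt_PYc (lam : ℝ) {x y : Fin N → ℝ} (h : CDom x y) (j : Fin N) :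
    HasDerivAt (fun t => PYc lam x (Function.update y j t) j) (QYc lam x y j) (y j) := by
  have hfun : (fun t => PYc lam x (Function.update y j t) j)
      = fun t => t + lam * (∑ k, if k = j then 0 else (t - y k)⁻¹)
          - lam * ∑ k, (t - x k)⁻¹ := by
    funext t
    rw [PYc, Function.update_self]
    have : (∑ k, if k = j then (0:ℝ) else (t - Function.update y j t k)⁻¹)
        = ∑ k, if k = j then (0:ℝ) else (t - y k)⁻¹ := by
      refine Finset.sum_congr rfl fun k _ => ?_
      by_cases hk : k = j
      · simp [hk]
      · rw [if_neg hk, if_neg hk, Function.update_of_ne hk]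
    rw [this]
  rw [hfun]
  have h1 : HasDerivAt (fun t : ℝ => t) (1 : ℝ) (y j) := hasDerivAt_id (y j)
  have h2 : HasDerivAt (fun t => ∑ k, if k = j then (0:ℝ) else (t - y k)⁻¹)
      (∑ k, if k = j then 0 else -(((y j - y k)^2)⁻¹)) (y j) := by
    refine HasDerivAt.fun_sum fun k _ => ?_
    by_cases hk : k = j
    · simp only [if_pos hk]; exact hasDerivAt_const _ _
    · simp only [if_neg hk]
      have hne : y j - y k ≠ 0 := h.yne (Ne.symm hk)
      have := ((hasDerivAt_id (y j)).sub_const (y k)).inv hne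
      refine HasDerivAt.congr_deriv this ?_
      simp only [id]
      field_simp
  have h3 : HasDerivAt (fun t => ∑ k, (t - x k)⁻¹)
      (∑ k, -(((y j - x k)^2)⁻¹)) (y j) := by
    refine HasDerivAt.fun_sum fun k _ => ?_
    have hne : y j - x k ≠ 0 := h.xyne k j
    have := ((hasDerivAt_id (y j)).sub_const (x k)).inv hne
    refine HasDerivAt.congr_deriv this ?_
    simp only [id]
    field_simp
  have htot := (h1.add (h2.const_mul lam)).sub (h3.const_mul lam)
  refine HasDerivAt.congr_deriv htot ?_
  rw [QYc]
  have e2 : (∑ k, if k = j then (0:ℝ) else -(((y j - y k)^2)⁻¹))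
      = -∑ k, if k = j then (0:ℝ) else ((y j - y k)^2)⁻¹ := by
    rw [← Finset.sum_neg_distrib]
    refine Finset.sum_congr rfl fun k _ => ?_
    by_cases hk : k = j <;> simp [hk]
  have e3 : (∑ k, -(((y j - x k)^2)⁻¹)) = -∑ k, ((y j - x k)^2)⁻¹ :=
    Finset.sum_neg_distrib _
  rw [e2, e3]
  ring

lemma hasDerivAt_expGG_x (lam : ℝ) {x y : Fin N → ℝ} (h : CDom x y) (j : Fin N) :
    HasDerivAt (fun t => Real.exp (GG lam (Function.update x j t) y))
      (Real.exp (GG lam x y) * PXc lam x y j) (x j) := by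
  have := (hasDerivAt_GG_x lam h j).exp
  rwa [Function.update_eq_self] at this

lemma hasDerivAt_expGG_y (lam : ℝ) {x y : Fin N → ℝ} (h : CDom x y) (j : Fin N) :
    HasDerivAt (fun t => Real.exp (GG lam x (Function.update y j t)))
      (Real.exp (GG lam x y) * PYc lam x y j) (y j) := by
  have := (hasDerivAt_GG_y lam h j).exp
  rwa [Function.update_eq_self] at this

lemma pd_F0_x (lam : ℝ) {x y : Fin N → ℝ} (h : CDom x y) (j : Fin N) :
    pd j (fun x' => F0 N lam x' y) x = PXc lam x y j * F0 N lam x y := by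
  have hev : (fun t => F0 N lam (Function.update x j t) y)
      =ᶠ[𝓝 (x j)] (fun t => Real.exp (GG lam (Function.update x j t) y)) :=
    (h.eventually_x j).mono fun t ht => F0_eq_exp lam ht
  have hder := ((hasDerivAt_expGG_x lam h j).congr_of_eventuallyEq hev).deriv
  show deriv (fun t => F0 N lam (Function.update x j t) y) (x j) = _
  rw [hder, F0_eq_exp lam h]
  ring

lemma pd_F0_y (lam : ℝ) {x y : Fin N → ℝ} (h : CDom x y) (j : Fin N) :
    pd j (fun y' => F0 N lam x y') y = PYc lam x y j * F0 N lam x y := by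
  have hev : (fun t => F0 N lam x (Function.update y j t))
      =ᶠ[𝓝 (y j)] (fun t => Real.exp (GG lam x (Function.update y j t))) :=
    (h.eventually_y j).mono fun t ht => F0_eq_exp lam ht
  have hder := ((hasDerivAt_expGG_y lam h j).congr_of_eventuallyEq hev).deriv
  show deriv (fun t => F0 N lam x (Function.update y j t)) (y j) = _
  rw [hder, F0_eq_exp lam h]
  ring

lemma pd2_F0_x (lam : ℝ) {x y : Fin N → ℝ} (h : CDom x y) (j : Fin N) :
    pd j (pd j (fun x' => F0 N lam x' y)) x
      = (QXc lam x y j + (PXc lam x y j)^2) * F0 N lam x y := by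
  have hev : (fun t => pd j (fun x' => F0 N lam x' y) (Function.update x j t))
      =ᶠ[𝓝 (x j)] (fun t => PXc lam (Function.update x j t) y j
        * Real.exp (GG lam (Function.update x j t) y)) :=
    (h.eventually_x j).mono fun t ht => by
      beta_reduce
      rw [pd_F0_x lam ht j, F0_eq_exp lam ht]
  have hd2 := (hasDerivAt_PXc lam h j).mul (hasDerivAt_expGG_x lam h j)
  rw [Function.update_eq_self] at hd2
  have hder := (hd2.congr_of_eventuallyEq hev).deriv
  show deriv (fun t => pd j (fun x' => F0 N lam x' y) (Function.update x j t)) (x j) = _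
  rw [hder, F0_eq_exp lam h]
  ring

lemma pd2_F0_y (lam : ℝ) {x y : Fin N → ℝ} (h : CDom x y) (j : Fin N) :
    pd j (pd j (fun y' => F0 N lam x y')) y
      = (QYc lam x y j + (PYc lam x y j)^2) * F0 N lam x y := by
  have hev : (fun t => pd j (fun y' => F0 N lam x y') (Function.update y j t))
      =ᶠ[𝓝 (y j)] (fun t => PYc lam x (Function.update y j t) j
        * Real.exp (GG lam x (Function.update y j t))) :=
    (h.eventually_y j).mono fun t ht => by
      beta_reduce
      rw [pd_F0_y lam ht j, F0_eq_exp lam ht]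
  have hd2 := (hasDerivAt_PYc lam h j).mul (hasDerivAt_expGG_y lam h j)
  rw [Function.update_eq_self] at hd2
  have hder := (hd2.congr_of_eventuallyEq hev).deriv
  show deriv (fun t => pd j (fun y' => F0 N lam x y') (Function.update y j t)) (y j) = _
  rw [hder, F0_eq_exp lam h]
  ring

noncomputable def Ax (x : Fin N → ℝ) (j : Fin N) : ℝ := ∑ k, if k = j then 0 else (x j - x k)⁻¹
noncomputable def Bx (x y : Fin N → ℝ) (j : Fin N) : ℝ := ∑ k, (y k - x j)⁻¹
noncomputable def Ay (y : Fin N → ℝ) (j : Fin N) : ℝ := ∑ k, if k = j then 0 else (y j - y k)⁻¹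
noncomputable def By (x y : Fin N → ℝ) (j : Fin N) : ℝ := ∑ k, (y j - x k)⁻¹

lemma PXc_eq (lam : ℝ) (x y : Fin N → ℝ) (j : Fin N) :
    PXc lam x y j = -x j + lam * Ax x j + lam * Bx x y j := rfl

lemma PYc_eq (lam : ℝ) (x y : Fin N → ℝ) (j : Fin N) :
    PYc lam x y j = y j + lam * Ay y j - lam * By x y j := rfl

/-- pairing identity: `∑_j w_j A_j = N(N-1)/2`. -/
lemma pairing (w : Fin N → ℝ) (hw : ∀ j k : Fin N, j ≠ k → w j - w k ≠ 0) :
    (∑ j, w j * (∑ k, if k = j then (0:ℝ) else (w j - w k)⁻¹))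
      = (N:ℝ)*((N:ℝ)-1)/2 := by
  have hS : (∑ j, w j * (∑ k, if k = j then (0:ℝ) else (w j - w k)⁻¹))
      = ∑ j, ∑ k, (if k = j then (0:ℝ) else w j * (w j - w k)⁻¹) := by
    refine Finset.sum_congr rfl fun j _ => ?_
    rw [Finset.mul_sum]
    exact Finset.sum_congr rfl fun k _ => by by_cases hk : k = j <;> simp [hk]
  have hswap : (∑ j, ∑ k, (if k = j then (0:ℝ) else w j * (w j - w k)⁻¹))
      = ∑ j, ∑ k, (if j = k then (0:ℝ) else w k * (w k - w j)⁻¹) := Finset.sum_comm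
  have hdouble : (∑ j, ∑ k, (if k = j then (0:ℝ) else w j * (w j - w k)⁻¹))
      + (∑ j, ∑ k, (if k = j then (0:ℝ) else w j * (w j - w k)⁻¹))
      = ∑ j : Fin N, ∑ k : Fin N, (if k = j then (0:ℝ) else 1) := by
    nth_rewrite 2 [hswap]
    rw [← Finset.sum_add_distrib]
    refine Finset.sum_congr rfl fun j _ => ?_
    rw [← Finset.sum_add_distrib]
    refine Finset.sum_congr rfl fun k _ => ?_
    by_cases hk : k = j
    · simp [hk]
    · rw [if_neg hk, if_neg (Ne.symm hk), if_neg hk]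
      have h1 : w j - w k ≠ 0 := hw j k (Ne.symm hk)
      have h2 : w k - w j ≠ 0 := hw k j hk
      field_simp
      ring
  have hcount : (∑ j : Fin N, ∑ k : Fin N, (if k = j then (0:ℝ) else 1))
      = (N:ℝ)*((N:ℝ)-1) := by
    have : ∀ j : Fin N, (∑ k : Fin N, if k = j then (0:ℝ) else 1) = (N:ℝ)-1 := by
      intro j
      have : (∑ k : Fin N, if k = j then (0:ℝ) else 1)
          = (∑ k : Fin N, (1:ℝ)) - ∑ k : Fin N, (if k = j then (1:ℝ) else 0) := by
        rw [← Finset.sum_sub_distrib]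
        exact Finset.sum_congr rfl fun k _ => by by_cases hk : k = j <;> simp [hk]
      rw [this]
      simp
    rw [Finset.sum_congr rfl fun j _ => this j]
    simp [mul_comm]
    ring
  rw [hS]
  have := hdouble.trans hcount
  linarith


lemma ite_prod_split (w : Fin N → ℝ) (j k l : Fin N) :
    ((if k = j then (0:ℝ) else (w j - w k)⁻¹) * (if l = j then (0:ℝ) else (w j - w l)⁻¹))
      = (if l = k then ((if k = j then (0:ℝ) else ((w j - w k)^2)⁻¹)) else 0)
        + (if k = j ∨ l = j ∨ l = k then (0:ℝ) else (w j - w k)⁻¹ * (w j - w l)⁻¹) := by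
  by_cases h1 : l = k <;> by_cases h2 : k = j <;> by_cases h3 : l = j <;>
    simp_all [sq, mul_inv]

lemma cyc3_pointwise (w : Fin N → ℝ) (hw : ∀ j k : Fin N, j ≠ k → w j - w k ≠ 0)
    (j k l : Fin N) :
    (if k = j ∨ l = j ∨ l = k then (0:ℝ) else (w j - w k)⁻¹ * (w j - w l)⁻¹)
      + (if l = k ∨ j = k ∨ j = l then (0:ℝ) else (w k - w l)⁻¹ * (w k - w j)⁻¹)
      + (if j = l ∨ k = l ∨ k = j then (0:ℝ) else (w l - w j)⁻¹ * (w l - w k)⁻¹) = 0 := by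
  by_cases hd : k = j ∨ l = j ∨ l = k
  · have c2 : l = k ∨ j = k ∨ j = l := by
      rcases hd with h | h | h
      exacts [Or.inr (Or.inl h.symm), Or.inr (Or.inr h.symm), Or.inl h]
    have c3 : j = l ∨ k = l ∨ k = j := by
      rcases hd with h | h | h
      exacts [Or.inr (Or.inr h), Or.inl h.symm, Or.inr (Or.inl h.symm)]
    rw [if_pos hd, if_pos c2, if_pos c3]
    ring
  · push_neg at hd
    obtain ⟨h1, h2, h3⟩ := hd
    rw [if_neg (by tauto),
      if_neg (by push_neg; exact ⟨h3, fun hh => h1 hh.symm, fun hh => h2 hh.symm⟩),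
      if_neg (by push_neg; exact ⟨fun hh => h2 hh.symm, fun hh => h3 hh.symm, h1⟩)]
    have n1 : w j - w k ≠ 0 := hw j k (Ne.symm h1)
    have n2 : w j - w l ≠ 0 := hw j l (Ne.symm h2)
    have n3 : w k - w l ≠ 0 := hw k l (Ne.symm h3)
    have n4 : w k - w j ≠ 0 := hw k j h1
    have n5 : w l - w j ≠ 0 := hw l j h2
    have n6 : w l - w k ≠ 0 := hw l k h3
    field_simp
    ring

/-- `∑_j A_j^2 = ∑_{j≠k} (w_j-w_k)^{-2}` via the three-term cyclic identity. -/
lemma sumA_sq (w : Fin N → ℝ) (hw : ∀ j k : Fin N, j ≠ k → w j - w k ≠ 0) :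
    (∑ j, (∑ k, if k = j then (0:ℝ) else (w j - w k)⁻¹)^2)
      = ∑ j, ∑ k, (if k = j then (0:ℝ) else ((w j - w k)^2)⁻¹) := by
  have hexp : (∑ j, (∑ k, if k = j then (0:ℝ) else (w j - w k)⁻¹)^2)
      = ∑ j, ∑ k, ∑ l, ((if k = j then (0:ℝ) else (w j - w k)⁻¹)
          * (if l = j then (0:ℝ) else (w j - w l)⁻¹)) := by
    refine Finset.sum_congr rfl fun j _ => ?_
    rw [sq, Finset.sum_mul_sum]
  have hsplit := ite_prod_split w
  have hcyc : (∑ j : Fin N, ∑ k : Fin N, ∑ l : Fin N,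
      if k = j ∨ l = j ∨ l = k then (0:ℝ) else (w j - w k)⁻¹ * (w j - w l)⁻¹) = 0 := by
    set g : Fin N × Fin N × Fin N → ℝ := fun p =>
      if p.2.1 = p.1 ∨ p.2.2 = p.1 ∨ p.2.2 = p.2.1 then (0:ℝ)
      else (w p.1 - w p.2.1)⁻¹ * (w p.1 - w p.2.2)⁻¹ with hg
    have hprod : (∑ j : Fin N, ∑ k : Fin N, ∑ l : Fin N,
        if k = j ∨ l = j ∨ l = k then (0:ℝ) else (w j - w k)⁻¹ * (w j - w l)⁻¹)
        = ∑ p : Fin N × Fin N × Fin N, g p := by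
      rw [Fintype.sum_prod_type]
      refine Finset.sum_congr rfl fun j _ => ?_
      rw [Fintype.sum_prod_type]
    let e : (Fin N × Fin N × Fin N) ≃ (Fin N × Fin N × Fin N) :=
      ⟨fun p => (p.2.1, p.2.2, p.1), fun p => (p.2.2, p.1, p.2.1),
        fun p => rfl, fun p => rfl⟩
    have h1 : (∑ p : Fin N × Fin N × Fin N, g p) = ∑ p, g (e p) :=
      (Fintype.sum_equiv e (fun p => g (e p)) g (fun p => rfl)).symm
    have h2 : (∑ p : Fin N × Fin N × Fin N, g p) = ∑ p, g (e (e p)) := by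
      rw [h1]
      exact (Fintype.sum_equiv e (fun p => g (e (e p))) (fun p => g (e p))
        (fun p => rfl)).symm
    have h3 : (∑ p : Fin N × Fin N × Fin N, g p) * 3
        = ∑ p : Fin N × Fin N × Fin N, (g p + g (e p) + g (e (e p))) := by
      rw [Finset.sum_add_distrib, Finset.sum_add_distrib, ← h1, ← h2]
      ring
    have hzero : ∀ p : Fin N × Fin N × Fin N, g p + g (e p) + g (e (e p)) = 0 := by
      rintro ⟨j, k, l⟩
      exact cyc3_pointwise w hw j k l
    have := h3.trans (by
      rw [Finset.sum_congr rfl fun p _ => hzero p, Finset.sum_const_zero])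
    rw [hprod]
    linarith
  rw [hexp]
  have : (∑ j : Fin N, ∑ k : Fin N, ∑ l : Fin N,
      ((if k = j then (0:ℝ) else (w j - w k)⁻¹) * (if l = j then (0:ℝ) else (w j - w l)⁻¹)))
      = (∑ j : Fin N, ∑ k : Fin N, ∑ l : Fin N,
          ((if l = k then ((if k = j then (0:ℝ) else ((w j - w k)^2)⁻¹)) else 0)
          + (if k = j ∨ l = j ∨ l = k then (0:ℝ) else (w j - w k)⁻¹ * (w j - w l)⁻¹))) :=
    Finset.sum_congr rfl fun j _ => Finset.sum_congr rfl fun k _ =>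
      Finset.sum_congr rfl fun l _ => hsplit j k l
  rw [this]
  simp only [Finset.sum_add_distrib]
  rw [hcyc, add_zero]
  refine Finset.sum_congr rfl fun j _ => Finset.sum_congr rfl fun k _ => ?_
  rw [Finset.sum_ite_eq' Finset.univ k
    (fun _ => if k = j then (0:ℝ) else ((w j - w k)^2)⁻¹), if_pos (Finset.mem_univ k)]

lemma sumB_sq {x y : Fin N → ℝ} (h : CDom x y) :
    (∑ j, (Bx x y j)^2)
      = (∑ j, ∑ k, ((y k - x j)^2)⁻¹) - 2 * ∑ j, Ay y j * By x y j := by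
  have hexp : (∑ j, (Bx x y j)^2)
      = ∑ j, ∑ k, ∑ l, (y k - x j)⁻¹ * (y l - x j)⁻¹ := by
    refine Finset.sum_congr rfl fun j _ => ?_
    rw [Bx, sq, Finset.sum_mul_sum]
  have hsplit : ∀ j k l : Fin N, (y k - x j)⁻¹ * (y l - x j)⁻¹
      = (if l = k then ((y k - x j)^2)⁻¹ else 0)
        + (if l = k then 0 else (y k - x j)⁻¹ * (y l - x j)⁻¹) := by
    intro j k l
    by_cases hlk : l = k
    · subst hlk; rw [if_pos rfl, if_pos rfl, add_zero, sq, mul_inv]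
    · rw [if_neg hlk, if_neg hlk, zero_add]
  have hoff : (∑ j : Fin N, ∑ k : Fin N, ∑ l : Fin N,
        if l = k then (0:ℝ) else (y k - x j)⁻¹ * (y l - x j)⁻¹)
      = 2 * ∑ j : Fin N, ∑ k : Fin N, ∑ l : Fin N,
        if l = k then (0:ℝ) else (y k - x j)⁻¹ * (y l - y k)⁻¹ := by
    have key : ∀ j k l : Fin N, (if l = k then (0:ℝ) else (y k - x j)⁻¹ * (y l - x j)⁻¹)
        = (if l = k then (0:ℝ) else (y k - x j)⁻¹ * (y l - y k)⁻¹)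
          - (if l = k then (0:ℝ) else (y l - x j)⁻¹ * (y l - y k)⁻¹) := by
      intro j k l
      by_cases hlk : l = k
      · simp [hlk]
      · rw [if_neg hlk, if_neg hlk, if_neg hlk]
        have n1 : y k - x j ≠ 0 := h.xyne j k
        have n2 : y l - x j ≠ 0 := h.xyne j l
        have n3 : y l - y k ≠ 0 := h.yne hlk
        field_simp
        ring
    have hstep : (∑ j : Fin N, ∑ k : Fin N, ∑ l : Fin N,
          if l = k then (0:ℝ) else (y k - x j)⁻¹ * (y l - x j)⁻¹)
        = (∑ j : Fin N, ∑ k : Fin N, ∑ l : Fin N,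
            if l = k then (0:ℝ) else (y k - x j)⁻¹ * (y l - y k)⁻¹)
          - (∑ j : Fin N, ∑ k : Fin N, ∑ l : Fin N,
            if l = k then (0:ℝ) else (y l - x j)⁻¹ * (y l - y k)⁻¹) := by
      rw [(Finset.sum_congr rfl fun j _ => Finset.sum_congr rfl fun k _ =>
        Finset.sum_congr rfl fun l _ => key j k l : _)]
      simp only [Finset.sum_sub_distrib]
    have hswap : (∑ j : Fin N, ∑ k : Fin N, ∑ l : Fin N,
          if l = k then (0:ℝ) else (y l - x j)⁻¹ * (y l - y k)⁻¹)
        = ∑ j : Fin N, ∑ k : Fin N, ∑ l : Fin N,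
          if k = l then (0:ℝ) else (y k - x j)⁻¹ * (y k - y l)⁻¹ := by
      refine Finset.sum_congr rfl fun j _ => ?_
      exact Finset.sum_comm
    have hneg : ∀ j k l : Fin N, (if k = l then (0:ℝ) else (y k - x j)⁻¹ * (y k - y l)⁻¹)
        = -(if l = k then (0:ℝ) else (y k - x j)⁻¹ * (y l - y k)⁻¹) := by
      intro j k l
      by_cases hlk : l = k
      · simp [hlk]
      · rw [if_neg (fun hh => hlk hh.symm), if_neg hlk, ← neg_sub (y l) (y k), inv_neg]
        ring
    rw [hstep, hswap,
      (Finset.sum_congr rfl fun j _ => Finset.sum_congr rfl fun k _ =>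
        Finset.sum_congr rfl fun l _ => hneg j k l : _)]
    simp only [Finset.sum_neg_distrib]
    ring
  have hAB : (∑ j, Ay y j * By x y j)
      = -∑ j : Fin N, ∑ k : Fin N, ∑ l : Fin N,
          if l = k then (0:ℝ) else (y k - x j)⁻¹ * (y l - y k)⁻¹ := by
    have e1 : (∑ j, Ay y j * By x y j)
        = ∑ k : Fin N, ∑ l : Fin N, ∑ j : Fin N,
            if l = k then (0:ℝ) else (y k - y l)⁻¹ * (y k - x j)⁻¹ := by
      refine Finset.sum_congr rfl fun k _ => ?_
      rw [Ay, By, Finset.sum_mul_sum]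
      refine Finset.sum_congr rfl fun l _ => ?_
      refine Finset.sum_congr rfl fun j _ => ?_
      by_cases hlk : l = k <;> simp [hlk]
    have t1 : (∑ j : Fin N, ∑ k : Fin N, ∑ l : Fin N,
          if l = k then (0:ℝ) else (y k - x j)⁻¹ * (y l - y k)⁻¹)
        = ∑ k : Fin N, ∑ l : Fin N, ∑ j : Fin N,
          if l = k then (0:ℝ) else (y k - x j)⁻¹ * (y l - y k)⁻¹ := by
      rw [Finset.sum_comm]
      exact Finset.sum_congr rfl fun k _ => Finset.sum_comm
    rw [e1, t1, ← Finset.sum_neg_distrib]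
    refine Finset.sum_congr rfl fun a _ => ?_
    rw [← Finset.sum_neg_distrib]
    refine Finset.sum_congr rfl fun b _ => ?_
    rw [← Finset.sum_neg_distrib]
    refine Finset.sum_congr rfl fun c _ => ?_
    by_cases hba : b = a
    · simp [hba]
    · rw [if_neg hba, if_neg hba, ← neg_sub (y b) (y a), inv_neg]
      ring
  have hdiag : (∑ j : Fin N, ∑ k : Fin N, ∑ l : Fin N,
        if l = k then ((y k - x j)^2)⁻¹ else (0:ℝ))
      = ∑ j : Fin N, ∑ k : Fin N, ((y k - x j)^2)⁻¹ := by
    refine Finset.sum_congr rfl fun j _ => Finset.sum_congr rfl fun k _ => ?_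
    rw [Finset.sum_ite_eq' Finset.univ k (fun _ => ((y k - x j)^2)⁻¹),
      if_pos (Finset.mem_univ k)]
  rw [hexp,
    (Finset.sum_congr rfl fun j _ => Finset.sum_congr rfl fun k _ =>
      Finset.sum_congr rfl fun l _ => hsplit j k l : _)]
  simp only [Finset.sum_add_distrib]
  rw [hdiag, hoff, hAB]
  ring

lemma sumB'_sq {x y : Fin N → ℝ} (h : CDom x y) :
    (∑ j, (By x y j)^2)
      = (∑ j, ∑ k, ((y j - x k)^2)⁻¹) + 2 * ∑ j, Ax x j * Bx x y j := by
  have hexp : (∑ j, (By x y j)^2)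
      = ∑ j, ∑ k, ∑ l, (y j - x k)⁻¹ * (y j - x l)⁻¹ := by
    refine Finset.sum_congr rfl fun j _ => ?_
    rw [By, sq, Finset.sum_mul_sum]
  have hsplit : ∀ j k l : Fin N, (y j - x k)⁻¹ * (y j - x l)⁻¹
      = (if l = k then ((y j - x k)^2)⁻¹ else 0)
        + (if l = k then 0 else (y j - x k)⁻¹ * (y j - x l)⁻¹) := by
    intro j k l
    by_cases hlk : l = k
    · subst hlk; rw [if_pos rfl, if_pos rfl, add_zero, sq, mul_inv]
    · rw [if_neg hlk, if_neg hlk, zero_add]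
  have hoff : (∑ j : Fin N, ∑ k : Fin N, ∑ l : Fin N,
        if l = k then (0:ℝ) else (y j - x k)⁻¹ * (y j - x l)⁻¹)
      = 2 * ∑ j : Fin N, ∑ k : Fin N, ∑ l : Fin N,
        if l = k then (0:ℝ) else (y j - x k)⁻¹ * (x k - x l)⁻¹ := by
    have key : ∀ j k l : Fin N, (if l = k then (0:ℝ) else (y j - x k)⁻¹ * (y j - x l)⁻¹)
        = (if l = k then (0:ℝ) else (y j - x k)⁻¹ * (x k - x l)⁻¹)
          - (if l = k then (0:ℝ) else (y j - x l)⁻¹ * (x k - x l)⁻¹) := by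
      intro j k l
      by_cases hlk : l = k
      · simp [hlk]
      · rw [if_neg hlk, if_neg hlk, if_neg hlk]
        have n1 : y j - x k ≠ 0 := h.xyne k j
        have n2 : y j - x l ≠ 0 := h.xyne l j
        have n3 : x k - x l ≠ 0 := h.xne (fun hh => hlk hh.symm)
        field_simp
        ring
    have hstep : (∑ j : Fin N, ∑ k : Fin N, ∑ l : Fin N,
          if l = k then (0:ℝ) else (y j - x k)⁻¹ * (y j - x l)⁻¹)
        = (∑ j : Fin N, ∑ k : Fin N, ∑ l : Fin N,
            if l = k then (0:ℝ) else (y j - x k)⁻¹ * (x k - x l)⁻¹)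
          - (∑ j : Fin N, ∑ k : Fin N, ∑ l : Fin N,
            if l = k then (0:ℝ) else (y j - x l)⁻¹ * (x k - x l)⁻¹) := by
      rw [(Finset.sum_congr rfl fun j _ => Finset.sum_congr rfl fun k _ =>
        Finset.sum_congr rfl fun l _ => key j k l : _)]
      simp only [Finset.sum_sub_distrib]
    have hswap : (∑ j : Fin N, ∑ k : Fin N, ∑ l : Fin N,
          if l = k then (0:ℝ) else (y j - x l)⁻¹ * (x k - x l)⁻¹)
        = ∑ j : Fin N, ∑ k : Fin N, ∑ l : Fin N,
          if k = l then (0:ℝ) else (y j - x k)⁻¹ * (x l - x k)⁻¹ := by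
      refine Finset.sum_congr rfl fun j _ => ?_
      exact Finset.sum_comm
    have hneg : ∀ j k l : Fin N, (if k = l then (0:ℝ) else (y j - x k)⁻¹ * (x l - x k)⁻¹)
        = -(if l = k then (0:ℝ) else (y j - x k)⁻¹ * (x k - x l)⁻¹) := by
      intro j k l
      by_cases hlk : l = k
      · simp [hlk]
      · rw [if_neg (fun hh => hlk hh.symm), if_neg hlk, ← neg_sub (x k) (x l), inv_neg]
        ring
    rw [hstep, hswap,
      (Finset.sum_congr rfl fun j _ => Finset.sum_congr rfl fun k _ =>
        Finset.sum_congr rfl fun l _ => hneg j k l : _)]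
    simp only [Finset.sum_neg_distrib]
    ring
  have hAB : (∑ j, Ax x j * Bx x y j)
      = ∑ j : Fin N, ∑ k : Fin N, ∑ l : Fin N,
          if l = k then (0:ℝ) else (y j - x k)⁻¹ * (x k - x l)⁻¹ := by
    have e1 : (∑ j, Ax x j * Bx x y j)
        = ∑ k : Fin N, ∑ l : Fin N, ∑ j : Fin N,
            if l = k then (0:ℝ) else (x k - x l)⁻¹ * (y j - x k)⁻¹ := by
      refine Finset.sum_congr rfl fun k _ => ?_
      rw [Ax, Bx, Finset.sum_mul_sum]
      refine Finset.sum_congr rfl fun l _ => ?_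
      refine Finset.sum_congr rfl fun j _ => ?_
      by_cases hlk : l = k <;> simp [hlk]
    have t1 : (∑ j : Fin N, ∑ k : Fin N, ∑ l : Fin N,
          if l = k then (0:ℝ) else (y j - x k)⁻¹ * (x k - x l)⁻¹)
        = ∑ k : Fin N, ∑ l : Fin N, ∑ j : Fin N,
          if l = k then (0:ℝ) else (y j - x k)⁻¹ * (x k - x l)⁻¹ := by
      rw [Finset.sum_comm]
      exact Finset.sum_congr rfl fun k _ => Finset.sum_comm
    rw [e1, t1]
    refine Finset.sum_congr rfl fun a _ => Finset.sum_congr rfl fun b _ =>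
      Finset.sum_congr rfl fun c _ => ?_
    by_cases hba : b = a
    · simp [hba]
    · rw [if_neg hba, if_neg hba]
      ring
  have hdiag : (∑ j : Fin N, ∑ k : Fin N, ∑ l : Fin N,
        if l = k then ((y j - x k)^2)⁻¹ else (0:ℝ))
      = ∑ j : Fin N, ∑ k : Fin N, ((y j - x k)^2)⁻¹ := by
    refine Finset.sum_congr rfl fun j _ => Finset.sum_congr rfl fun k _ => ?_
    rw [Finset.sum_ite_eq' Finset.univ k (fun _ => ((y j - x k)^2)⁻¹),
      if_pos (Finset.mem_univ k)]
  rw [hexp,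
    (Finset.sum_congr rfl fun j _ => Finset.sum_congr rfl fun k _ =>
      Finset.sum_congr rfl fun l _ => hsplit j k l : _)]
  simp only [Finset.sum_add_distrib]
  rw [hdiag, hoff, hAB]

lemma sumXB_YB' {x y : Fin N → ℝ} (h : CDom x y) :
    (∑ j, x j * Bx x y j) - (∑ j, y j * By x y j) = -(N:ℝ)^2 := by
  have e1 : (∑ j, x j * Bx x y j) = ∑ j : Fin N, ∑ k : Fin N, x j * (y k - x j)⁻¹ := by
    refine Finset.sum_congr rfl fun j _ => ?_
    rw [Bx, Finset.mul_sum]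
  have e2 : (∑ j, y j * By x y j) = ∑ j : Fin N, ∑ k : Fin N, y k * (y k - x j)⁻¹ := by
    have : (∑ j, y j * By x y j) = ∑ j : Fin N, ∑ k : Fin N, y j * (y j - x k)⁻¹ := by
      refine Finset.sum_congr rfl fun j _ => ?_
      rw [By, Finset.mul_sum]
    rw [this]
    exact Finset.sum_comm
  rw [e1, e2, ← Finset.sum_sub_distrib]
  have : ∀ j : Fin N, (∑ k : Fin N, x j * (y k - x j)⁻¹) - (∑ k : Fin N, y k * (y k - x j)⁻¹)
      = ∑ k : Fin N, (-1 : ℝ) := by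
    intro j
    rw [← Finset.sum_sub_distrib]
    refine Finset.sum_congr rfl fun k _ => ?_
    have n1 : y k - x j ≠ 0 := h.xyne j k
    field_simp
    ring
  rw [Finset.sum_congr rfl fun j _ => this j]
  simp
  ring

lemma half_sum (w : Fin N → ℝ) :
    (∑ j : Fin N, ∑ k : Fin N, if k = j then (0:ℝ) else ((w j - w k)^2)⁻¹)
      = 2 * ∑ j : Fin N, ∑ k : Fin N, if j < k then ((w j - w k)^2)⁻¹ else 0 := by
  have hsplit : ∀ j k : Fin N, (if k = j then (0:ℝ) else ((w j - w k)^2)⁻¹)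
      = (if j < k then ((w j - w k)^2)⁻¹ else 0)
        + (if k < j then ((w j - w k)^2)⁻¹ else 0) := by
    intro j k
    rcases lt_trichotomy j k with hc | hc | hc
    · rw [if_neg (ne_of_gt hc), if_pos hc, if_neg (not_lt_of_gt hc), add_zero]
    · subst hc; simp
    · rw [if_neg (ne_of_lt hc), if_neg (not_lt_of_gt hc), if_pos hc, zero_add]
  rw [(Finset.sum_congr rfl fun j _ => Finset.sum_congr rfl fun k _ => hsplit j k : _)]
  simp only [Finset.sum_add_distrib]
  have hswap : (∑ j : Fin N, ∑ k : Fin N, if k < j then ((w j - w k)^2)⁻¹ else 0)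
      = ∑ j : Fin N, ∑ k : Fin N, if j < k then ((w j - w k)^2)⁻¹ else 0 := by
    rw [Finset.sum_comm]
    refine Finset.sum_congr rfl fun j _ => Finset.sum_congr rfl fun k _ => ?_
    by_cases hc : j < k
    · rw [if_pos hc, if_pos hc]
      congr 1
      ring
    · rw [if_neg hc, if_neg hc]
  rw [hswap]
  ring

lemma sum_QXc (lam : ℝ) (x y : Fin N → ℝ) :
    (∑ j, QXc lam x y j)
      = -(N:ℝ) - lam * (∑ j : Fin N, ∑ k : Fin N, if k = j then (0:ℝ) else ((x j - x k)^2)⁻¹)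
        + lam * ∑ j : Fin N, ∑ k : Fin N, ((y k - x j)^2)⁻¹ := by
  simp only [QXc, Finset.sum_add_distrib, Finset.sum_sub_distrib, ← Finset.mul_sum]
  congr 2
  simp

lemma sum_QYc (lam : ℝ) (x y : Fin N → ℝ) :
    (∑ j, QYc lam x y j)
      = (N:ℝ) - lam * (∑ j : Fin N, ∑ k : Fin N, if k = j then (0:ℝ) else ((y j - y k)^2)⁻¹)
        + lam * ∑ j : Fin N, ∑ k : Fin N, ((y j - x k)^2)⁻¹ := by
  simp only [QYc, Finset.sum_add_distrib, Finset.sum_sub_distrib, ← Finset.mul_sum]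
  congr 2
  simp

lemma sum_PXc_sq (lam : ℝ) (x y : Fin N → ℝ) :
    (∑ j, (PXc lam x y j)^2)
      = (∑ j, (x j)^2) + lam^2 * (∑ j, (Ax x j)^2) + lam^2 * (∑ j, (Bx x y j)^2)
        + 2*lam^2 * (∑ j, Ax x j * Bx x y j) - 2*lam * (∑ j, x j * Ax x j)
        - 2*lam * (∑ j, x j * Bx x y j) := by
  have e : ∀ j, (PXc lam x y j)^2
      = (x j)^2 + lam^2 * (Ax x j)^2 + lam^2 * (Bx x y j)^2
        + (2*lam^2) * (Ax x j * Bx x y j) - (2*lam) * (x j * Ax x j)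
        - (2*lam) * (x j * Bx x y j) := by
    intro j
    rw [PXc_eq]
    ring
  rw [Finset.sum_congr rfl fun j _ => e j]
  simp only [Finset.sum_add_distrib, Finset.sum_sub_distrib, ← Finset.mul_sum]

lemma sum_PYc_sq (lam : ℝ) (x y : Fin N → ℝ) :
    (∑ j, (PYc lam x y j)^2)
      = (∑ j, (y j)^2) + lam^2 * (∑ j, (Ay y j)^2) + lam^2 * (∑ j, (By x y j)^2)
        - 2*lam^2 * (∑ j, Ay y j * By x y j) + 2*lam * (∑ j, y j * Ay y j)
        - 2*lam * (∑ j, y j * By x y j) := by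
  have e : ∀ j, (PYc lam x y j)^2
      = (y j)^2 + lam^2 * (Ay y j)^2 + lam^2 * (By x y j)^2
        - (2*lam^2) * (Ay y j * By x y j) + (2*lam) * (y j * Ay y j)
        - (2*lam) * (y j * By x y j) := by
    intro j
    rw [PYc_eq]
    ring
  rw [Finset.sum_congr rfl fun j _ => e j]
  simp only [Finset.sum_add_distrib, Finset.sum_sub_distrib, ← Finset.mul_sum]

lemma key_algebra (lam : ℝ) {x y : Fin N → ℝ} (h : CDom x y) :
    (∑ j, (-(QXc lam x y j) - (PXc lam x y j)^2 + (x j)^2))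
      + 2*lam*(lam-1) * (∑ j : Fin N, ∑ k : Fin N, if j < k then ((x j - x k)^2)⁻¹ else 0)
    = (∑ j, (-(QYc lam x y j) - (PYc lam x y j)^2 + (y j)^2))
      + 2*lam*(lam-1) * (∑ j : Fin N, ∑ k : Fin N, if j < k then ((y j - y k)^2)⁻¹ else 0)
      + 2*(1-lam)*(N:ℝ) := by
  have hxw : ∀ j k : Fin N, j ≠ k → x j - x k ≠ 0 := fun j k hjk => h.xne hjk
  have hyw : ∀ j k : Fin N, j ≠ k → y j - y k ≠ 0 := fun j k hjk => h.yne hjk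
  have hsplitL : (∑ j, (-(QXc lam x y j) - (PXc lam x y j)^2 + (x j)^2))
      = -(∑ j, QXc lam x y j) - (∑ j, (PXc lam x y j)^2) + (∑ j, (x j)^2) := by
    simp only [Finset.sum_add_distrib, Finset.sum_sub_distrib, Finset.sum_neg_distrib]
  have hsplitR : (∑ j, (-(QYc lam x y j) - (PYc lam x y j)^2 + (y j)^2))
      = -(∑ j, QYc lam x y j) - (∑ j, (PYc lam x y j)^2) + (∑ j, (y j)^2) := by
    simp only [Finset.sum_add_distrib, Finset.sum_sub_distrib, Finset.sum_neg_distrib]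
  rw [hsplitL, hsplitR, sum_QXc, sum_QYc, sum_PXc_sq, sum_PYc_sq]
  rw [half_sum x, half_sum y]
  have hA : (∑ j, (Ax x j)^2)
      = 2 * ∑ j : Fin N, ∑ k : Fin N, if j < k then ((x j - x k)^2)⁻¹ else 0 := by
    rw [← half_sum x]
    exact sumA_sq x hxw
  have hA' : (∑ j, (Ay y j)^2)
      = 2 * ∑ j : Fin N, ∑ k : Fin N, if j < k then ((y j - y k)^2)⁻¹ else 0 := by
    rw [← half_sum y]
    exact sumA_sq y hyw
  have hxA : (∑ j, x j * Ax x j) = (N:ℝ)*((N:ℝ)-1)/2 := pairing x hxw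
  have hyA : (∑ j, y j * Ay y j) = (N:ℝ)*((N:ℝ)-1)/2 := pairing y hyw
  have hP2 : (∑ j : Fin N, ∑ k : Fin N, ((y j - x k)^2)⁻¹)
      = ∑ j : Fin N, ∑ k : Fin N, ((y k - x j)^2)⁻¹ := Finset.sum_comm
  rw [hA, hA', hxA, hyA, hP2, sumB_sq h, sumB'_sq h, hP2]
  linear_combination (2*lam) * sumXB_YB' h

lemma calogeroH_x_eq (lam : ℝ) {x y : Fin N → ℝ} (h : CDom x y) :
    calogeroH N lam (fun x' => F0 N lam x' y) x
      = ((∑ j, (-(QXc lam x y j) - (PXc lam x y j)^2 + (x j)^2))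
          + 2*lam*(lam-1) * (∑ j : Fin N, ∑ k : Fin N, if j < k then ((x j - x k)^2)⁻¹ else 0))
        * F0 N lam x y := by
  show (∑ j, (- pd j (pd j (fun x' => F0 N lam x' y)) x + (x j)^2 * F0 N lam x y)) +
      2*lam*(lam-1) * (∑ j : Fin N, ∑ k : Fin N,
        (if j < k then F0 N lam x y / (x j - x k)^2 else 0)) = _
  have e1 : ∀ j : Fin N, - pd j (pd j (fun x' => F0 N lam x' y)) x + (x j)^2 * F0 N lam x y
      = (-(QXc lam x y j) - (PXc lam x y j)^2 + (x j)^2) * F0 N lam x y := by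
    intro j
    rw [pd2_F0_x lam h j]
    ring
  have e2 : ∀ j k : Fin N, (if j < k then F0 N lam x y / (x j - x k)^2 else 0)
      = (if j < k then ((x j - x k)^2)⁻¹ else 0) * F0 N lam x y := by
    intro j k
    by_cases hjk : j < k
    · rw [if_pos hjk, if_pos hjk, div_eq_inv_mul, mul_comm]
    · rw [if_neg hjk, if_neg hjk, zero_mul]
  rw [Finset.sum_congr rfl fun j _ => e1 j,
    (Finset.sum_congr rfl fun j _ => Finset.sum_congr rfl fun k _ => e2 j k : _),
    ← Finset.sum_mul]
  have e3 : (∑ j : Fin N, ∑ k : Fin N, (if j < k then ((x j - x k)^2)⁻¹ else 0) * F0 N lam x y)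
      = (∑ j : Fin N, ∑ k : Fin N, if j < k then ((x j - x k)^2)⁻¹ else 0) * F0 N lam x y := by
    rw [Finset.sum_mul]
    exact Finset.sum_congr rfl fun j _ => by rw [Finset.sum_mul]
  rw [e3]
  ring

lemma calogeroH_y_eq (lam : ℝ) {x y : Fin N → ℝ} (h : CDom x y) :
    calogeroH N lam (fun y' => F0 N lam x y') y
      = ((∑ j, (-(QYc lam x y j) - (PYc lam x y j)^2 + (y j)^2))
          + 2*lam*(lam-1) * (∑ j : Fin N, ∑ k : Fin N, if j < k then ((y j - y k)^2)⁻¹ else 0))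
        * F0 N lam x y := by
  show (∑ j, (- pd j (pd j (fun y' => F0 N lam x y')) y + (y j)^2 * F0 N lam x y)) +
      2*lam*(lam-1) * (∑ j : Fin N, ∑ k : Fin N,
        (if j < k then F0 N lam x y / (y j - y k)^2 else 0)) = _
  have e1 : ∀ j : Fin N, - pd j (pd j (fun y' => F0 N lam x y')) y + (y j)^2 * F0 N lam x y
      = (-(QYc lam x y j) - (PYc lam x y j)^2 + (y j)^2) * F0 N lam x y := by
    intro j
    rw [pd2_F0_y lam h j]
    ring
  have e2 : ∀ j k : Fin N, (if j < k then F0 N lam x y / (y j - y k)^2 else 0)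
      = (if j < k then ((y j - y k)^2)⁻¹ else 0) * F0 N lam x y := by
    intro j k
    by_cases hjk : j < k
    · rw [if_pos hjk, if_pos hjk, div_eq_inv_mul, mul_comm]
    · rw [if_neg hjk, if_neg hjk, zero_mul]
  rw [Finset.sum_congr rfl fun j _ => e1 j,
    (Finset.sum_congr rfl fun j _ => Finset.sum_congr rfl fun k _ => e2 j k : _),
    ← Finset.sum_mul]
  have e3 : (∑ j : Fin N, ∑ k : Fin N, (if j < k then ((y j - y k)^2)⁻¹ else 0) * F0 N lam x y)
      = (∑ j : Fin N, ∑ k : Fin N, if j < k then ((y j - y k)^2)⁻¹ else 0) * F0 N lam x y := by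
    rw [Finset.sum_mul]
    exact Finset.sum_congr rfl fun j _ => by rw [Finset.sum_mul]
  rw [e3]
  ring

end Calo

theorem stmt_0 (N : ℕ) (hN : 1 ≤ N) (lam : ℝ) (hlam : 0 < lam) :
    ∀ x y : Fin N → ℝ,
      (∀ j k : Fin N, j < k → x j < x k) →
      (∀ j k : Fin N, j < k → y j < y k) →
      x ⟨N-1, by omega⟩ < y ⟨0, by omega⟩ →
      calogeroH N lam (fun x' => F0 N lam x' y) x =
        calogeroH N lam (fun y' => F0 N lam x y') y + (2*(1-lam)*(N:ℝ)) * F0 N lam x y := by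
  intro x y hx hy hxy
  have hmono : ∀ (w : Fin N → ℝ), (∀ j k : Fin N, j < k → w j < w k) →
      ∀ j k : Fin N, j ≤ k → w j ≤ w k := by
    intro w hw j k hjk
    rcases eq_or_lt_of_le hjk with rfl | hlt
    · exact le_refl _
    · exact (hw j k hlt).le
  have h : CDom x y := by
    refine ⟨hx, hy, fun j k => ?_⟩
    have h1 : x j ≤ x ⟨N-1, by omega⟩ := by
      refine hmono x hx j _ ?_
      have := j.isLt
      rw [Fin.le_def]
      simp
      omega
    have h2 : y ⟨0, by omega⟩ ≤ y k := by
      refine hmono y hy _ k ?_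
      rw [Fin.le_def]
      simp
    exact lt_of_le_of_lt h1 (lt_of_lt_of_le hxy h2)
  rw [calogeroH_x_eq lam h, calogeroH_y_eq lam h]
  linear_combination (F0 N lam x y) * key_algebra lam h
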